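/- Let g be in Monge form with k₁ ≠ k₂ as above. The origin is a first order ridge point relative to the principal vector v₁ (i.e. v₁κ₁(0) = 0 and v₁²κ₁(0) ≠ 0, where v₁ is the unit principal vector field with v₁(0) = ∂/∂u) if and only if a₃₀ = 0 and 3a₂₁² + (a₄₀ − 3k₁³)(k₁ − k₂) ≠ 0. -/

import Mathlib

noncomputable section

/-- Partial derivative in the first variable. -/
def pdu (f : ℝ × ℝ → ℝ) (p : ℝ × ℝ) : ℝ := fderiv ℝ f p (1, 0)

/-- Partial derivative in the second variable. -/
def pdv (f : ℝ × ℝ → ℝ) (p : ℝ × ℝ) : ℝ := fderiv ℝ f p (0, 1)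

/-- Coefficient `E` of the first fundamental form of the Monge surface `(u,v,f(u,v))`. -/
def Ee (f : ℝ × ℝ → ℝ) (p : ℝ × ℝ) : ℝ := 1 + (pdu f p) ^ 2

/-- Coefficient `F` of the first fundamental form. -/
def Ff (f : ℝ × ℝ → ℝ) (p : ℝ × ℝ) : ℝ := pdu f p * pdv f p

/-- Coefficient `G` of the first fundamental form. -/
def Gg (f : ℝ × ℝ → ℝ) (p : ℝ × ℝ) : ℝ := 1 + (pdv f p) ^ 2

/-- Coefficient `L` of the second fundamental form. -/
def Ll (f : ℝ × ℝ → ℝ) (p : ℝ × ℝ) : ℝ :=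
  pdu (pdu f) p / Real.sqrt (1 + (pdu f p) ^ 2 + (pdv f p) ^ 2)

/-- Coefficient `M` of the second fundamental form. -/
def Mm (f : ℝ × ℝ → ℝ) (p : ℝ × ℝ) : ℝ :=
  pdv (pdu f) p / Real.sqrt (1 + (pdu f p) ^ 2 + (pdv f p) ^ 2)

/-- Coefficient `N` of the second fundamental form. -/
def Nn (f : ℝ × ℝ → ℝ) (p : ℝ × ℝ) : ℝ :=
  pdv (pdv f) p / Real.sqrt (1 + (pdu f p) ^ 2 + (pdv f p) ^ 2)

/-- `κ p` is a principal curvature of the Monge surface `(u,v,f(u,v))` at `p`: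
it is a root of the characteristic equation
`(EG-F²)κ² - (EN-2FM+GL)κ + (LN-M²) = 0`. -/
def IsPrincipalCurvature (f : ℝ × ℝ → ℝ) (κ : ℝ × ℝ → ℝ) (p : ℝ × ℝ) : Prop :=
  (Ee f p * Gg f p - Ff f p ^ 2) * κ p ^ 2
    - (Ee f p * Nn f p - 2 * Ff f p * Mm f p + Gg f p * Ll f p) * κ p
    + (Ll f p * Nn f p - Mm f p ^ 2) = 0

/-- `w` is a unit principal vector field for the principal curvature function `κ`:
`II·w = κ I·w` and `w` has unit length with respect to the first fundamental form. -/
def IsPrincipalField (f : ℝ × ℝ → ℝ) (κ : ℝ × ℝ → ℝ) (w : ℝ × ℝ → ℝ × ℝ)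
    (p : ℝ × ℝ) : Prop :=
  Ll f p * (w p).1 + Mm f p * (w p).2 = κ p * (Ee f p * (w p).1 + Ff f p * (w p).2) ∧
  Mm f p * (w p).1 + Nn f p * (w p).2 = κ p * (Ff f p * (w p).1 + Gg f p * (w p).2) ∧
  Ee f p * (w p).1 ^ 2 + 2 * Ff f p * (w p).1 * (w p).2 + Gg f p * (w p).2 ^ 2 = 1

/-- Directional derivative of a function along a vector field. -/
def dirDeriv (w : ℝ × ℝ → ℝ × ℝ) (h : ℝ × ℝ → ℝ) (p : ℝ × ℝ) : ℝ :=
  fderiv ℝ h p (w p)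

/-!
Write `A = L - κE`, `B = M - κF`, `C = N - κG`. The principal field equations say
`A w₁ + B w₂ = 0` and `B w₁ + C w₂ = 0`, and at the origin `w = ∂u`, `A = B = 0`, `C = k₂ - k₁`.
Differentiating the first equation once gives `κ_u = a₃₀` and `κ_v = a₂₁`, the second gives
`(k₁ - k₂) ∂u w₂ = a₂₁`, and the unit-length condition gives `∂u w₁ = 0`. Differentiating the first
equation twice along `∂u` gives `κ_uu = a₄₀ - 3k₁³ + 2a₂₁ ∂u w₂`, the Monge form entering through
`L_uu = a₄₀ - k₁³` and `E_uu = 2k₁²`. Since `v₁²κ₁ = κ_uu + κ_u ∂u w₁ + κ_v ∂u w₂` at the origin,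
`(k₁ - k₂) v₁²κ₁(0) = 3a₂₁² + (a₄₀ - 3k₁³)(k₁ - k₂)`, while `v₁κ₁(0) = κ_u(0) = a₃₀`.
-/

open Filter Topology
open scoped ContDiff

section PartialDerivatives

variable {g h : ℝ × ℝ → ℝ} {w : ℝ × ℝ → ℝ × ℝ} {p : ℝ × ℝ}

theorem pdu_const (c : ℝ) : pdu (fun _ => c) = fun _ => 0 := by ext; simp [pdu]

theorem pdv_const (c : ℝ) : pdv (fun _ => c) = fun _ => 0 := by ext; simp [pdv]

theorem pdu_add (hg : DifferentiableAt ℝ g p) (hh : DifferentiableAt ℝ h p) :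
    pdu (fun q => g q + h q) p = pdu g p + pdu h p := by
  simp [pdu, fderiv_fun_add hg hh]

theorem pdv_add (hg : DifferentiableAt ℝ g p) (hh : DifferentiableAt ℝ h p) :
    pdv (fun q => g q + h q) p = pdv g p + pdv h p := by
  simp [pdv, fderiv_fun_add hg hh]

theorem pdu_mul (hg : DifferentiableAt ℝ g p) (hh : DifferentiableAt ℝ h p) :
    pdu (fun q => g q * h q) p = pdu g p * h p + g p * pdu h p := by
  simp [pdu, fderiv_fun_mul hg hh]; ring

theorem pdv_mul (hg : DifferentiableAt ℝ g p) (hh : DifferentiableAt ℝ h p) :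
    pdv (fun q => g q * h q) p = pdv g p * h p + g p * pdv h p := by
  simp [pdv, fderiv_fun_mul hg hh]; ring

theorem Filter.EventuallyEq.pdu_eq (hgh : g =ᶠ[𝓝 p] h) : pdu g p = pdu h p := by
  simp only [pdu, hgh.fderiv_eq]

theorem Filter.EventuallyEq.pdv_eq (hgh : g =ᶠ[𝓝 p] h) : pdv g p = pdv h p := by
  simp only [pdv, hgh.fderiv_eq]

theorem Filter.EventuallyEq.pdu (hgh : g =ᶠ[𝓝 p] h) : pdu g =ᶠ[𝓝 p] pdu h :=
  hgh.eventuallyEq_nhds.mono fun _ hq => hq.pdu_eq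

theorem contDiffAt_pdu {m n : WithTop ℕ∞} (hg : ContDiffAt ℝ n g p) (hmn : m + 1 ≤ n) :
    ContDiffAt ℝ m (pdu g) p :=
  (hg.fderiv_right hmn).clm_apply contDiffAt_const

theorem contDiffAt_pdv {m n : WithTop ℕ∞} (hg : ContDiffAt ℝ n g p) (hmn : m + 1 ≤ n) :
    ContDiffAt ℝ m (pdv g) p :=
  (hg.fderiv_right hmn).clm_apply contDiffAt_const

theorem contDiff_pdu (hg : ContDiff ℝ ∞ g) : ContDiff ℝ ∞ (pdu g) :=
  (hg.fderiv_right (m := ∞) (by simp)).clm_apply contDiff_const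

theorem contDiff_pdv (hg : ContDiff ℝ ∞ g) : ContDiff ℝ ∞ (pdv g) :=
  (hg.fderiv_right (m := ∞) (by simp)).clm_apply contDiff_const

theorem pdu_pdv_comm (hg : ContDiffAt ℝ 2 g p) : pdu (pdv g) p = pdv (pdu g) p := by
  have hd : DifferentiableAt ℝ (fderiv ℝ g) p :=
    (hg.fderiv_right le_rfl).differentiableAt one_ne_zero
  have key : ∀ v z : ℝ × ℝ, fderiv ℝ (fun q => fderiv ℝ g q v) p z = fderiv ℝ (fderiv ℝ g) p z v :=
    fun v z => by simp [fderiv_clm_apply hd (differentiableAt_const v)]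
  show fderiv ℝ (fun q => fderiv ℝ g q (0, 1)) p (1, 0)
    = fderiv ℝ (fun q => fderiv ℝ g q (1, 0)) p (0, 1)
  rw [key, key]
  exact hg.isSymmSndFDerivAt (by simp) _ _

theorem ContDiffAt.eventually_differentiableAt (hg : ContDiffAt ℝ 2 g p) :
    ∀ᶠ q in 𝓝 p, DifferentiableAt ℝ g q :=
  (hg.eventually (by simp)).mono fun _ hq => hq.differentiableAt two_ne_zero

theorem ContDiffAt.differentiableAt_pdu (hg : ContDiffAt ℝ 2 g p) : DifferentiableAt ℝ (pdu g) p :=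
  (contDiffAt_pdu hg (m := 1) (by norm_num)).differentiableAt one_ne_zero

theorem ContDiffAt.differentiableAt_pdv (hg : ContDiffAt ℝ 2 g p) : DifferentiableAt ℝ (pdv g) p :=
  (contDiffAt_pdv hg (m := 1) (by norm_num)).differentiableAt one_ne_zero

theorem pdu_pdu_add (hg : ContDiffAt ℝ 2 g p) (hh : ContDiffAt ℝ 2 h p) :
    pdu (pdu (fun q => g q + h q)) p = pdu (pdu g) p + pdu (pdu h) p := by
  have : pdu (fun q => g q + h q) =ᶠ[𝓝 p] fun q => pdu g q + pdu h q := by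
    filter_upwards [hg.eventually_differentiableAt, hh.eventually_differentiableAt]
      with q hgq hhq using pdu_add hgq hhq
  rw [this.pdu_eq, pdu_add hg.differentiableAt_pdu hh.differentiableAt_pdu]

theorem pdu_pdu_mul (hg : ContDiffAt ℝ 2 g p) (hh : ContDiffAt ℝ 2 h p) :
    pdu (pdu (fun q => g q * h q)) p
      = pdu (pdu g) p * h p + 2 * (pdu g p * pdu h p) + g p * pdu (pdu h) p := by
  have : pdu (fun q => g q * h q) =ᶠ[𝓝 p] fun q => pdu g q * h q + g q * pdu h q := by
    filter_upwards [hg.eventually_differentiableAt, hh.eventually_differentiableAt]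
      with q hgq hhq using pdu_mul hgq hhq
  have hg1 := hg.differentiableAt two_ne_zero
  have hh1 := hh.differentiableAt two_ne_zero
  have hgu := hg.differentiableAt_pdu
  have hhu := hh.differentiableAt_pdu
  rw [this.pdu_eq]
  simp (disch := fun_prop) only [pdu_add, pdu_mul]
  ring

theorem fderiv_apply_eq_pdu_pdv (h : ℝ × ℝ → ℝ) (q v : ℝ × ℝ) :
    fderiv ℝ h q v = v.1 * pdu h q + v.2 * pdv h q := by
  have hv : v = v.1 • ((1 : ℝ), (0 : ℝ)) + v.2 • ((0 : ℝ), (1 : ℝ)) := by ext <;> simp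
  conv_lhs => rw [hv, map_add, map_smul, map_smul]
  rfl

theorem dirDeriv_eq_pdu (h : ℝ × ℝ → ℝ) (hwp : w p = (1, 0)) : dirDeriv w h p = pdu h p := by
  simp [dirDeriv, fderiv_apply_eq_pdu_pdv, hwp]

theorem dirDeriv_dirDeriv_eq (hh : ContDiffAt ℝ 2 h p)
    (hw : DifferentiableAt ℝ w p) (hwp : w p = (1, 0)) :
    dirDeriv w (dirDeriv w h) p = pdu (pdu h) p + pdu h p * pdu (fun q => (w q).1) p
      + pdv h p * pdu (fun q => (w q).2) p := by
  have hd : dirDeriv w h = fun q => (w q).1 * pdu h q + (w q).2 * pdv h q :=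
    funext fun q => fderiv_apply_eq_pdu_pdv h q (w q)
  have hhu := hh.differentiableAt_pdu
  have hhv := hh.differentiableAt_pdv
  rw [dirDeriv_eq_pdu _ hwp, hd]
  simp (disch := fun_prop) only [pdu_add, pdu_mul]
  simp only [hwp]
  ring

end PartialDerivatives

def normalNorm (f : ℝ × ℝ → ℝ) (p : ℝ × ℝ) : ℝ := Real.sqrt (1 + pdu f p ^ 2 + pdv f p ^ 2)

section MongeForms

variable {f : ℝ × ℝ → ℝ} {p : ℝ × ℝ}

theorem normalNorm_pos : 0 < normalNorm f p := Real.sqrt_pos.mpr (by positivity)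

theorem normalNorm_mul_self (f : ℝ × ℝ → ℝ) :
    (fun q => normalNorm f q * normalNorm f q)
      = fun q => 1 + pdu f q * pdu f q + pdv f q * pdv f q := by
  ext q
  rw [normalNorm, Real.mul_self_sqrt (by positivity)]
  ring

theorem contDiff_normalNorm (hf : ContDiff ℝ ∞ f) : ContDiff ℝ ∞ (normalNorm f) := by
  have hu := contDiff_pdu hf
  have hv := contDiff_pdv hf
  exact ((contDiff_const.add (hu.pow 2)).add (hv.pow 2)).sqrt fun _ => (by positivity)

theorem normalNorm_eq_one (hu : pdu f p = 0) (hv : pdv f p = 0) : normalNorm f p = 1 := by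
  simp [normalNorm, hu, hv]

theorem pdu_normalNorm (hf : ContDiff ℝ ∞ f) (hu : pdu f p = 0) (hv : pdv f p = 0) :
    pdu (normalNorm f) p = 0 := by
  have hS := (contDiff_normalNorm hf).differentiable (by simp)
  have hfu := (contDiff_pdu hf).differentiable (by simp)
  have hfv := (contDiff_pdv hf).differentiable (by simp)
  have h := congrArg (pdu · p) (normalNorm_mul_self f)
  simp (disch := fun_prop) only [pdu_mul, pdu_add, pdu_const] at h
  simp only [hu, hv, normalNorm_eq_one hu hv] at h
  linarith

theorem pdv_normalNorm (hf : ContDiff ℝ ∞ f) (hu : pdu f p = 0) (hv : pdv f p = 0) :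
    pdv (normalNorm f) p = 0 := by
  have hS := (contDiff_normalNorm hf).differentiable (by simp)
  have hfu := (contDiff_pdu hf).differentiable (by simp)
  have hfv := (contDiff_pdv hf).differentiable (by simp)
  have h := congrArg (pdv · p) (normalNorm_mul_self f)
  simp (disch := fun_prop) only [pdv_mul, pdv_add, pdv_const] at h
  simp only [hu, hv, normalNorm_eq_one hu hv] at h
  linarith

theorem pdu_pdu_normalNorm (hf : ContDiff ℝ ∞ f) (hu : pdu f p = 0) (hv : pdv f p = 0) :
    pdu (pdu (normalNorm f)) p = pdu (pdu f) p ^ 2 + pdv (pdu f) p ^ 2 := by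
  have hS : ContDiff ℝ 2 (normalNorm f) := (contDiff_normalNorm hf).of_le (by norm_cast)
  have hfu : ContDiff ℝ 2 (pdu f) := (contDiff_pdu hf).of_le (by norm_cast)
  have hfv : ContDiff ℝ 2 (pdv f) := (contDiff_pdv hf).of_le (by norm_cast)
  have h := congrArg (fun g => pdu (pdu g) p) (normalNorm_mul_self f)
  simp (disch := fun_prop) only [pdu_pdu_mul, pdu_pdu_add, pdu_const] at h
  rw [pdu_pdv_comm (hf.contDiffAt.of_le (by norm_cast)), hu, hv, normalNorm_eq_one hu hv,
    pdu_normalNorm hf hu hv] at h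
  linarith

theorem pdu_div_normalNorm {g : ℝ × ℝ → ℝ} (hf : ContDiff ℝ ∞ f) (hu : pdu f p = 0)
    (hv : pdv f p = 0) (hg : DifferentiableAt ℝ g p) :
    pdu (fun q => g q / normalNorm f q) p = pdu g p := by
  have hS : DifferentiableAt ℝ (normalNorm f) p :=
    (contDiff_normalNorm hf).differentiable (by simp) p
  have hgS : DifferentiableAt ℝ (fun q => g q / normalNorm f q) p := by
    fun_prop (disch := exact normalNorm_pos.ne')
  have h : pdu (fun q => g q / normalNorm f q * normalNorm f q) p = pdu g p := by
    simp only [div_mul_cancel₀ _ normalNorm_pos.ne']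
  rw [pdu_mul hgS hS, normalNorm_eq_one hu hv, pdu_normalNorm hf hu hv] at h
  simpa using h

theorem pdv_div_normalNorm {g : ℝ × ℝ → ℝ} (hf : ContDiff ℝ ∞ f) (hu : pdu f p = 0)
    (hv : pdv f p = 0) (hg : DifferentiableAt ℝ g p) :
    pdv (fun q => g q / normalNorm f q) p = pdv g p := by
  have hS : DifferentiableAt ℝ (normalNorm f) p :=
    (contDiff_normalNorm hf).differentiable (by simp) p
  have hgS : DifferentiableAt ℝ (fun q => g q / normalNorm f q) p := by
    fun_prop (disch := exact normalNorm_pos.ne')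
  have h : pdv (fun q => g q / normalNorm f q * normalNorm f q) p = pdv g p := by
    simp only [div_mul_cancel₀ _ normalNorm_pos.ne']
  rw [pdv_mul hgS hS, normalNorm_eq_one hu hv, pdv_normalNorm hf hu hv] at h
  simpa using h

theorem pdu_pdu_div_normalNorm {g : ℝ × ℝ → ℝ} (hf : ContDiff ℝ ∞ f) (hu : pdu f p = 0)
    (hv : pdv f p = 0) (hg : ContDiffAt ℝ 2 g p) :
    pdu (pdu (fun q => g q / normalNorm f q)) p
      = pdu (pdu g) p - g p * (pdu (pdu f) p ^ 2 + pdv (pdu f) p ^ 2) := by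
  have hS : ContDiffAt ℝ 2 (normalNorm f) p :=
    ((contDiff_normalNorm hf).of_le (by norm_cast)).contDiffAt
  have h : pdu (pdu (fun q => g q / normalNorm f q * normalNorm f q)) p = pdu (pdu g) p := by
    simp only [div_mul_cancel₀ _ normalNorm_pos.ne']
  have hgS : ContDiffAt ℝ 2 (fun q => g q / normalNorm f q) p := hg.div hS normalNorm_pos.ne'
  rw [pdu_pdu_mul hgS hS, normalNorm_eq_one hu hv,
    pdu_normalNorm hf hu hv, pdu_pdu_normalNorm hf hu hv, div_one] at h
  linear_combination h

theorem contDiff_Ee (hf : ContDiff ℝ ∞ f) : ContDiff ℝ ∞ (Ee f) :=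
  contDiff_const.add ((contDiff_pdu hf).pow 2)

theorem contDiff_Ff (hf : ContDiff ℝ ∞ f) : ContDiff ℝ ∞ (Ff f) :=
  (contDiff_pdu hf).mul (contDiff_pdv hf)

theorem contDiff_Gg (hf : ContDiff ℝ ∞ f) : ContDiff ℝ ∞ (Gg f) :=
  contDiff_const.add ((contDiff_pdv hf).pow 2)

theorem contDiff_Ll (hf : ContDiff ℝ ∞ f) : ContDiff ℝ ∞ (Ll f) :=
  (contDiff_pdu (contDiff_pdu hf)).div (contDiff_normalNorm hf) fun _ => normalNorm_pos.ne'

theorem contDiff_Mm (hf : ContDiff ℝ ∞ f) : ContDiff ℝ ∞ (Mm f) :=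
  (contDiff_pdv (contDiff_pdu hf)).div (contDiff_normalNorm hf) fun _ => normalNorm_pos.ne'

theorem contDiff_Nn (hf : ContDiff ℝ ∞ f) : ContDiff ℝ ∞ (Nn f) :=
  (contDiff_pdv (contDiff_pdv hf)).div (contDiff_normalNorm hf) fun _ => normalNorm_pos.ne'

theorem Ee_eq_one (hu : pdu f p = 0) : Ee f p = 1 := by simp [Ee, hu]

theorem Ff_eq_zero (hu : pdu f p = 0) : Ff f p = 0 := by simp [Ff, hu]

theorem Gg_eq_one (hv : pdv f p = 0) : Gg f p = 1 := by simp [Gg, hv]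

theorem Ll_eq (hu : pdu f p = 0) (hv : pdv f p = 0) : Ll f p = pdu (pdu f) p := by
  simp [Ll, hu, hv]

theorem Mm_eq (hu : pdu f p = 0) (hv : pdv f p = 0) : Mm f p = pdv (pdu f) p := by
  simp [Mm, hu, hv]

theorem Nn_eq (hu : pdu f p = 0) (hv : pdv f p = 0) : Nn f p = pdv (pdv f) p := by
  simp [Nn, hu, hv]

theorem pdu_Ee (hf : ContDiff ℝ ∞ f) (hu : pdu f p = 0) : pdu (Ee f) p = 0 := by
  have := (contDiff_pdu hf).differentiable (by simp)
  show pdu (fun q => 1 + pdu f q ^ 2) p = 0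
  simp (disch := fun_prop) only [sq, pdu_add, pdu_mul, pdu_const, hu]
  ring

theorem pdv_Ee (hf : ContDiff ℝ ∞ f) (hu : pdu f p = 0) : pdv (Ee f) p = 0 := by
  have := (contDiff_pdu hf).differentiable (by simp)
  show pdv (fun q => 1 + pdu f q ^ 2) p = 0
  simp (disch := fun_prop) only [sq, pdv_add, pdv_mul, pdv_const, hu]
  ring

theorem pdu_Ff (hf : ContDiff ℝ ∞ f) (hu : pdu f p = 0) (hv : pdv f p = 0) :
    pdu (Ff f) p = 0 := by
  have := (contDiff_pdu hf).differentiable (by simp)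
  have := (contDiff_pdv hf).differentiable (by simp)
  show pdu (fun q => pdu f q * pdv f q) p = 0
  simp (disch := fun_prop) only [pdu_mul, hu, hv]
  ring

theorem pdu_Gg (hf : ContDiff ℝ ∞ f) (hv : pdv f p = 0) : pdu (Gg f) p = 0 := by
  have := (contDiff_pdv hf).differentiable (by simp)
  show pdu (fun q => 1 + pdv f q ^ 2) p = 0
  simp (disch := fun_prop) only [sq, pdu_add, pdu_mul, pdu_const, hv]
  ring

theorem pdu_pdu_Ee (hf : ContDiff ℝ ∞ f) (hu : pdu f p = 0) :
    pdu (pdu (Ee f)) p = 2 * pdu (pdu f) p ^ 2 := by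
  have : ContDiff ℝ 2 (pdu f) := (contDiff_pdu hf).of_le (by norm_cast)
  show pdu (pdu (fun q => 1 + pdu f q ^ 2)) p = _
  simp (disch := fun_prop) only [sq, pdu_pdu_add, pdu_pdu_mul, pdu_const, hu]
  ring

theorem pdu_Ll (hf : ContDiff ℝ ∞ f) (hu : pdu f p = 0) (hv : pdv f p = 0) :
    pdu (Ll f) p = pdu (pdu (pdu f)) p :=
  pdu_div_normalNorm hf hu hv ((contDiff_pdu (contDiff_pdu hf)).differentiable (by simp) p)

theorem pdv_Ll (hf : ContDiff ℝ ∞ f) (hu : pdu f p = 0) (hv : pdv f p = 0) :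
    pdv (Ll f) p = pdv (pdu (pdu f)) p :=
  pdv_div_normalNorm hf hu hv ((contDiff_pdu (contDiff_pdu hf)).differentiable (by simp) p)

theorem pdu_Mm (hf : ContDiff ℝ ∞ f) (hu : pdu f p = 0) (hv : pdv f p = 0) :
    pdu (Mm f) p = pdv (pdu (pdu f)) p := by
  have hfu := contDiff_pdu hf
  rw [← pdu_pdv_comm ((hfu.of_le (by norm_cast)).contDiffAt)]
  exact pdu_div_normalNorm hf hu hv ((contDiff_pdv hfu).differentiable (by simp) p)

theorem pdu_pdu_Ll (hf : ContDiff ℝ ∞ f) (hu : pdu f p = 0) (hv : pdv f p = 0) :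
    pdu (pdu (Ll f)) p = pdu (pdu (pdu (pdu f))) p
      - pdu (pdu f) p * (pdu (pdu f) p ^ 2 + pdv (pdu f) p ^ 2) :=
  pdu_pdu_div_normalNorm hf hu hv
    (((contDiff_pdu (contDiff_pdu hf)).of_le (by norm_cast)).contDiffAt)

end MongeForms

section PrincipalField

variable {f κ : ℝ × ℝ → ℝ} {w : ℝ × ℝ → ℝ × ℝ} {p : ℝ × ℝ}

theorem IsPrincipalField.curvature_eq (hfield : IsPrincipalField f κ w p) (hu : pdu f p = 0)
    (hv : pdv f p = 0) (hwp : w p = (1, 0)) : κ p = pdu (pdu f) p := by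
  have h := hfield.1
  simp only [hwp, Ee_eq_one hu, Ff_eq_zero hu, Ll_eq hu hv] at h
  linarith

theorem IsPrincipalField.pdv_pdu_eq_zero (hfield : IsPrincipalField f κ w p)
    (hu : pdu f p = 0) (hv : pdv f p = 0) (hwp : w p = (1, 0)) : pdv (pdu f) p = 0 := by
  have h := hfield.2.1
  simp only [hwp, Ff_eq_zero hu, Gg_eq_one hv, Mm_eq hu hv] at h
  linarith

theorem principalField_firstOrder (hf : ContDiff ℝ ∞ f) (hu : pdu f p = 0) (hv : pdv f p = 0)
    (hκ : DifferentiableAt ℝ κ p) (hw : DifferentiableAt ℝ w p) (hwp : w p = (1, 0))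
    (hfield : ∀ᶠ q in 𝓝 p, IsPrincipalField f κ w q) :
    pdu κ p = pdu (pdu (pdu f)) p ∧ pdv κ p = pdv (pdu (pdu f)) p ∧
      pdu (fun q => (w q).1) p = 0 ∧
      (pdu (pdu f) p - pdv (pdv f) p) * pdu (fun q => (w q).2) p = pdv (pdu (pdu f)) p := by
  have hE := (contDiff_Ee hf).differentiable (by simp) p
  have hF := (contDiff_Ff hf).differentiable (by simp) p
  have hG := (contDiff_Gg hf).differentiable (by simp) p
  have hL := (contDiff_Ll hf).differentiable (by simp) p
  have hM := (contDiff_Mm hf).differentiable (by simp) p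
  have hN := (contDiff_Nn hf).differentiable (by simp) p
  have hκp := hfield.self_of_nhds.curvature_eq hu hv hwp
  have huv := hfield.self_of_nhds.pdv_pdu_eq_zero hu hv hwp
  have eq1 : (fun q => Ll f q * (w q).1 + Mm f q * (w q).2)
      =ᶠ[𝓝 p] fun q => κ q * (Ee f q * (w q).1 + Ff f q * (w q).2) :=
    hfield.mono fun _ hq => hq.1
  have eq2 : (fun q => Mm f q * (w q).1 + Nn f q * (w q).2)
      =ᶠ[𝓝 p] fun q => κ q * (Ff f q * (w q).1 + Gg f q * (w q).2) :=
    hfield.mono fun _ hq => hq.2.1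
  have eq3 : (fun q => Ee f q * (w q).1 ^ 2 + 2 * Ff f q * (w q).1 * (w q).2 + Gg f q * (w q).2 ^ 2)
      =ᶠ[𝓝 p] fun _ => 1 :=
    hfield.mono fun _ hq => hq.2.2
  have h1u := eq1.pdu_eq
  have h1v := eq1.pdv_eq
  have h2u := eq2.pdu_eq
  have h3u := eq3.pdu_eq
  simp (disch := fun_prop) only [pdu_add, pdu_mul] at h1u h2u
  simp (disch := fun_prop) only [pdv_add, pdv_mul] at h1v
  simp (disch := fun_prop) only [sq, pdu_add, pdu_mul, pdu_const] at h3u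
  simp only [hwp, hκp, Ee_eq_one hu, Ff_eq_zero hu, Gg_eq_one hv, Ll_eq hu hv, Mm_eq hu hv,
    Nn_eq hu hv, huv, pdu_Ee hf hu, pdv_Ee hf hu, pdu_Ff hf hu hv, pdu_Gg hf hv, pdu_Ll hf hu hv,
    pdv_Ll hf hu hv, pdu_Mm hf hu hv] at h1u h1v h2u h3u
  exact ⟨by linear_combination -h1u, by linear_combination -h1v, by linear_combination h3u / 2,
    by linear_combination -h2u⟩

theorem pdu_pdu_curvature_eq (hf : ContDiff ℝ ∞ f) (hu : pdu f p = 0) (hv : pdv f p = 0)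
    (hκ : ContDiffAt ℝ 2 κ p) (hw : ContDiffAt ℝ 2 w p) (hwp : w p = (1, 0))
    (hfield : ∀ᶠ q in 𝓝 p, IsPrincipalField f κ w q) :
    pdu (pdu κ) p = pdu (pdu (pdu (pdu f))) p - 3 * pdu (pdu f) p ^ 3
      + 2 * pdv (pdu (pdu f)) p * pdu (fun q => (w q).2) p := by
  have hE : ContDiff ℝ 2 (Ee f) := (contDiff_Ee hf).of_le (by norm_cast)
  have hF : ContDiff ℝ 2 (Ff f) := (contDiff_Ff hf).of_le (by norm_cast)
  have hL : ContDiff ℝ 2 (Ll f) := (contDiff_Ll hf).of_le (by norm_cast)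
  have hM : ContDiff ℝ 2 (Mm f) := (contDiff_Mm hf).of_le (by norm_cast)
  have hE' := hE.differentiable two_ne_zero
  have hF' := hF.differentiable two_ne_zero
  have hw' := hw.differentiableAt two_ne_zero
  obtain ⟨hκu, -, hw1u, -⟩ :=
    principalField_firstOrder hf hu hv (hκ.differentiableAt two_ne_zero) hw' hwp hfield
  have hκp := hfield.self_of_nhds.curvature_eq hu hv hwp
  have huv := hfield.self_of_nhds.pdv_pdu_eq_zero hu hv hwp
  have eq1 : (fun q => Ll f q * (w q).1 + Mm f q * (w q).2)
      =ᶠ[𝓝 p] fun q => κ q * (Ee f q * (w q).1 + Ff f q * (w q).2) :=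
    hfield.mono fun _ hq => hq.1
  have h := eq1.pdu.pdu_eq
  simp (disch := fun_prop) only [pdu_pdu_add, pdu_pdu_mul, pdu_add, pdu_mul] at h
  simp only [hwp, hκp, hκu, hw1u, huv, Ee_eq_one hu, Ff_eq_zero hu, Ll_eq hu hv, Mm_eq hu hv,
    pdu_Ee hf hu, pdu_Ff hf hu hv, pdu_Ll hf hu hv, pdu_Mm hf hu hv, pdu_pdu_Ee hf hu,
    pdu_pdu_Ll hf hu hv] at h
  linear_combination -h

theorem dirDeriv_curvature_eq (hf : ContDiff ℝ ∞ f) (hu : pdu f p = 0) (hv : pdv f p = 0)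
    (hκ : DifferentiableAt ℝ κ p) (hw : DifferentiableAt ℝ w p) (hwp : w p = (1, 0))
    (hfield : ∀ᶠ q in 𝓝 p, IsPrincipalField f κ w q) :
    dirDeriv w κ p = pdu (pdu (pdu f)) p := by
  rw [dirDeriv_eq_pdu κ hwp]
  exact (principalField_firstOrder hf hu hv hκ hw hwp hfield).1

theorem mul_dirDeriv_dirDeriv_curvature_eq (hf : ContDiff ℝ ∞ f) (hu : pdu f p = 0)
    (hv : pdv f p = 0) (hκ : ContDiffAt ℝ 2 κ p) (hw : ContDiffAt ℝ 2 w p) (hwp : w p = (1, 0))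
    (hfield : ∀ᶠ q in 𝓝 p, IsPrincipalField f κ w q) :
    (pdu (pdu f) p - pdv (pdv f) p) * dirDeriv w (dirDeriv w κ) p
      = 3 * pdv (pdu (pdu f)) p ^ 2
        + (pdu (pdu (pdu (pdu f))) p - 3 * pdu (pdu f) p ^ 3)
          * (pdu (pdu f) p - pdv (pdv f) p) := by
  have hw' := hw.differentiableAt two_ne_zero
  obtain ⟨hκu, hκv, hw1u, hw2u⟩ :=
    principalField_firstOrder hf hu hv (hκ.differentiableAt two_ne_zero) hw' hwp hfield
  rw [dirDeriv_dirDeriv_eq hκ hw' hwp, pdu_pdu_curvature_eq hf hu hv hκ hw hwp hfield, hκv, hw1u]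
  linear_combination 3 * pdv (pdu (pdu f)) p * hw2u

end PrincipalField

theorem stmt10_general
    (f : ℝ × ℝ → ℝ) (hf : ContDiff ℝ (⊤ : ℕ∞) f)
    (k1 k2 a30 a21 a40 : ℝ) (hk : k1 ≠ k2)
    (h10 : pdu f 0 = 0) (h01 : pdv f 0 = 0)
    (h20 : pdu (pdu f) 0 = k1) (h02 : pdv (pdv f) 0 = k2)
    (h30 : pdu (pdu (pdu f)) 0 = a30) (h21 : pdv (pdu (pdu f)) 0 = a21)
    (h40 : pdu (pdu (pdu (pdu f))) 0 = a40)
    (κ : ℝ × ℝ → ℝ) (hκs : ContDiffAt ℝ (⊤ : ℕ∞) κ 0)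
    (w : ℝ × ℝ → ℝ × ℝ) (hws : ContDiffAt ℝ (⊤ : ℕ∞) w 0) (hw0 : w 0 = (1, 0))
    (hw : ∀ᶠ p in nhds (0 : ℝ × ℝ), IsPrincipalField f κ w p) :
    (dirDeriv w κ 0 = 0 ∧ dirDeriv w (dirDeriv w κ) 0 ≠ 0) ↔
      (a30 = 0 ∧ 3 * a21 ^ 2 + (a40 - 3 * k1 ^ 3) * (k1 - k2) ≠ 0) := by
  have hκ2 : ContDiffAt ℝ 2 κ 0 := hκs.of_le (by norm_cast)
  have hw2 : ContDiffAt ℝ 2 w 0 := hws.of_le (by norm_cast)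
  have ridge1 := dirDeriv_curvature_eq hf h10 h01 (hκ2.differentiableAt two_ne_zero)
    (hw2.differentiableAt two_ne_zero) hw0 hw
  have ridge2 := mul_dirDeriv_dirDeriv_curvature_eq hf h10 h01 hκ2 hw2 hw0 hw
  rw [h20, h02, h21, h40] at ridge2
  rw [ridge1, h30, ← ridge2, mul_ne_zero_iff, and_iff_right (sub_ne_zero.mpr hk)]

/-- The origin is a first order ridge point relative to the principal vector `v₁`
(`v₁κ₁(0) = 0`, `v₁²κ₁(0) ≠ 0`) iff `a₃₀ = 0` and
`3a₂₁² + (a₄₀ - 3k₁³)(k₁ - k₂) ≠ 0`. -/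
theorem stmt10
    (f : ℝ × ℝ → ℝ) (hf : ContDiff ℝ (⊤ : ℕ∞) f)
    (k1 k2 a30 a21 a12 a03 a40 a31 a22 : ℝ) (hk : k1 ≠ k2)
    (h00 : f 0 = 0) (h10 : pdu f 0 = 0) (h01 : pdv f 0 = 0)
    (h20 : pdu (pdu f) 0 = k1) (h11 : pdv (pdu f) 0 = 0) (h02 : pdv (pdv f) 0 = k2)
    (h30 : pdu (pdu (pdu f)) 0 = a30) (h21 : pdv (pdu (pdu f)) 0 = a21)
    (h12 : pdv (pdv (pdu f)) 0 = a12) (h03 : pdv (pdv (pdv f)) 0 = a03)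
    (h40 : pdu (pdu (pdu (pdu f))) 0 = a40)
    (h31 : pdv (pdu (pdu (pdu f))) 0 = a31)
    (h22 : pdv (pdv (pdu (pdu f))) 0 = a22)
    (κ : ℝ × ℝ → ℝ) (hκs : ContDiffAt ℝ (⊤ : ℕ∞) κ 0) (hκ0 : κ 0 = k1)
    (hκeig : ∀ᶠ p in nhds (0 : ℝ × ℝ), IsPrincipalCurvature f κ p)
    (w : ℝ × ℝ → ℝ × ℝ) (hws : ContDiffAt ℝ (⊤ : ℕ∞) w 0) (hw0 : w 0 = (1, 0))
    (hw : ∀ᶠ p in nhds (0 : ℝ × ℝ), IsPrincipalField f κ w p) :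
    (dirDeriv w κ 0 = 0 ∧ dirDeriv w (dirDeriv w κ) 0 ≠ 0) ↔
      (a30 = 0 ∧ 3 * a21 ^ 2 + (a40 - 3 * k1 ^ 3) * (k1 - k2) ≠ 0) :=
  stmt10_general f hf k1 k2 a30 a21 a40 hk h10 h01 h20 h02 h30 h21 h40 κ hκs w hws hw0 hw
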